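/- Let (X,T) be a TDS. The Feldman–Katok pseudometric is invariant along orbits: for every n ≥ 0 and all x,y ∈ X one has ρ_FK(T^n x, y) = ρ_FK(x, y). -/

import Mathlib

/-!
Replacing `x` by `T^[k] x` changes the maximal fit of an `(n,δ)`-match by at most `k`: a match
of `x` with `z`, re-read from `T^[k] x`, loses at most its first `k` pairs, and a match of
`T^[k] x` with `z`, re-read from `x`, loses at most its last `k` pairs. Hence `f̄_{n,δ}` moves by
at most `k / n`, its limsup `f̄_δ` does not move at all, and neither does `ρ_FK`.
-/

open Filter Topology MeasureTheory Set

namespace FKPaper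

variable {X : Type*} [MetricSpace X]

/-- The maximal fit of an `(n,δ)`-match between the orbits of `x` and `z` under `T`:
the largest cardinality of the domain of an order-preserving bijection
`π : D → R`, with `D, R ⊆ {0,…,n-1}` and `dist (T^[i] x) (T^[π i] z) < δ` for `i ∈ D`. -/
noncomputable def maxFit (T : X → X) (δ : ℝ) (n : ℕ) (x z : X) : ℕ :=
  sSup {k : ℕ | ∃ i j : Fin k → ℕ, StrictMono i ∧ StrictMono j ∧
    (∀ s, i s < n) ∧ (∀ s, j s < n) ∧ ∀ s, dist (T^[i s] x) (T^[j s] z) < δ}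

/-- `f̄_{n,δ}(x,z) = 1 - (maximal fit of an (n,δ)-match of x and z)/n`. -/
noncomputable def fbarN (T : X → X) (δ : ℝ) (n : ℕ) (x z : X) : ℝ :=
  1 - (maxFit T δ n x z : ℝ) / n

/-- `f̄_δ(x,z) = limsup_{n→∞} f̄_{n,δ}(x,z)`. -/
noncomputable def fbar (T : X → X) (δ : ℝ) (x z : X) : ℝ :=
  Filter.limsup (fun n => fbarN T δ n x z) Filter.atTop

/-- The Feldman–Katok pseudometric `ρ_FK(x,z) = inf {δ > 0 : f̄_δ(x,z) < δ}`. -/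
noncomputable def rhoFK (T : X → X) (x z : X) : ℝ :=
  sInf {δ : ℝ | 0 < δ ∧ fbar T δ x z < δ}

end FKPaper

theorem StrictMono.fin_apply_add_sub_le {M : ℕ} {f : Fin M → ℕ} (hf : StrictMono f)
    {s t : Fin M} (hst : s ≤ t) : f s + (t - s : ℕ) ≤ f t := by
  obtain ⟨d, hd⟩ : ∃ d, (t : ℕ) = s + d := ⟨t - s, by omega⟩
  induction d generalizing t with
  | zero => rw [show t = s from Fin.ext (by omega)]; simp
  | succ d ih =>
    let t' : Fin M := ⟨s + d, by omega⟩
    have hprev : f s + d ≤ f t' := by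
      simpa [t'] using ih (t := t') (Fin.le_def.2 (by simp [t'])) rfl
    have hstep : f t' < f t := hf (Fin.lt_def.2 (by simp [t']; omega))
    omega

theorem StrictMono.fin_val_le_apply {M : ℕ} {f : Fin M → ℕ} (hf : StrictMono f) (t : Fin M) :
    (t : ℕ) ≤ f t := by
  have h := hf.fin_apply_add_sub_le (s := ⟨0, t.pos⟩) (t := t) (Fin.le_def.2 (Nat.zero_le _))
  simp only [Nat.sub_zero] at h
  omega

section LimsupOfTendstoSub

variable {ι : Type*} {f : Filter ι} [f.NeBot] {u v : ι → ℝ}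

theorem Filter.limsup_le_of_tendsto_sub (hu : IsBoundedUnder (· ≤ ·) f u)
    (hu' : IsBoundedUnder (· ≥ ·) f u) (h : Tendsto (v - u) f (𝓝 0)) :
    limsup v f ≤ limsup u f :=
  calc limsup v f = limsup (u + (v - u)) f := by rw [add_sub_cancel]
    _ ≤ limsup u f + limsup (v - u) f :=
      limsup_add_le hu' hu h.isCoboundedUnder_le h.isBoundedUnder_le
    _ = limsup u f := by rw [h.limsup_eq, add_zero]

theorem Filter.limsup_eq_of_tendsto_sub (hu : IsBoundedUnder (· ≤ ·) f u)
    (hu' : IsBoundedUnder (· ≥ ·) f u) (hv : IsBoundedUnder (· ≤ ·) f v)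
    (hv' : IsBoundedUnder (· ≥ ·) f v) (h : Tendsto (u - v) f (𝓝 0)) :
    limsup u f = limsup v f :=
  le_antisymm (limsup_le_of_tendsto_sub hv hv' h)
    (limsup_le_of_tendsto_sub hu hu' (by simpa [Pi.sub_def] using h.neg))

end LimsupOfTendstoSub

namespace FKPaper

variable {X : Type*} [MetricSpace X] {T : X → X} {δ : ℝ} {n M : ℕ} {x z : X}

-- `maxFit T δ n x z` is `sSup (fitSet T δ n x z)` by definition.
def fitSet (T : X → X) (δ : ℝ) (n : ℕ) (x z : X) : Set ℕ :=
  {k : ℕ | ∃ i j : Fin k → ℕ, StrictMono i ∧ StrictMono j ∧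
    (∀ s, i s < n) ∧ (∀ s, j s < n) ∧ ∀ s, dist (T^[i s] x) (T^[j s] z) < δ}

theorem zero_mem_fitSet : 0 ∈ fitSet T δ n x z :=
  ⟨Fin.elim0, Fin.elim0, fun s => s.elim0, fun s => s.elim0,
    fun s => s.elim0, fun s => s.elim0, fun s => s.elim0⟩

theorem le_of_mem_fitSet (hM : M ∈ fitSet T δ n x z) : M ≤ n := by
  obtain ⟨i, -, hi, -, hin, -, -⟩ := hM
  cases M with
  | zero => exact n.zero_le
  | succ M =>
    have := hi.fin_val_le_apply (Fin.last M)
    have := hin (Fin.last M)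
    simp only [Fin.val_last] at *
    omega

theorem bddAbove_fitSet : BddAbove (fitSet T δ n x z) :=
  ⟨n, fun _ => le_of_mem_fitSet⟩

theorem maxFit_mem_fitSet : maxFit T δ n x z ∈ fitSet T δ n x z :=
  Nat.sSup_mem ⟨0, zero_mem_fitSet⟩ bddAbove_fitSet

theorem le_maxFit (hM : M ∈ fitSet T δ n x z) : M ≤ maxFit T δ n x z :=
  le_csSup bddAbove_fitSet hM

theorem maxFit_le : maxFit T δ n x z ≤ n :=
  le_of_mem_fitSet maxFit_mem_fitSet

theorem sub_mem_fitSet_iterate (hM : M ∈ fitSet T δ n x z) (k : ℕ) :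
    M - k ∈ fitSet T δ n (T^[k] x) z := by
  obtain ⟨i, j, hi, hj, hin, hjn, hd⟩ := hM
  let e : Fin (M - k) → Fin M := fun t => ⟨t + k, by omega⟩
  have he : StrictMono e := fun a b hab => Fin.lt_def.2 (by simp [e]; omega)
  have hki : ∀ t, k ≤ i (e t) := fun t => by
    have := hi.fin_val_le_apply (e t)
    have : (e t : ℕ) = t + k := rfl
    omega
  refine ⟨fun t => i (e t) - k, j ∘ e, fun a b hab => ?_, hj.comp he, fun t => ?_,
    fun t => hjn _, fun t => ?_⟩
  · have := hi (he hab); have := hki a; dsimp only; omega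
  · have := hin (e t); dsimp only; omega
  · rw [← Function.iterate_add_apply, Nat.sub_add_cancel (hki t)]
    exact hd (e t)

theorem sub_mem_fitSet_of_iterate {k : ℕ} (hM : M ∈ fitSet T δ n (T^[k] x) z) :
    M - k ∈ fitSet T δ n x z := by
  obtain ⟨i, j, hi, hj, hin, hjn, hd⟩ := hM
  let e : Fin (M - k) → Fin M := Fin.castLE (by omega)
  have he : StrictMono e := Fin.strictMono_castLE _
  refine ⟨fun t => i (e t) + k, j ∘ e, fun a b hab => ?_, hj.comp he, fun t => ?_,
    fun t => hjn _, fun t => ?_⟩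
  · have := hi (he hab); dsimp only; omega
  · dsimp only
    let last : Fin M := ⟨M - 1, by have := t.pos; omega⟩
    have hle : e t ≤ last := Fin.le_def.2 (by simp only [e, last, Fin.val_castLE]; omega)
    have := hi.fin_apply_add_sub_le hle
    have := hin last
    simp only [e, last, Fin.val_castLE] at *
    omega
  · rw [Function.iterate_add_apply]
    exact hd (e t)

theorem abs_maxFit_iterate_sub_maxFit_le (k : ℕ) :
    |(maxFit T δ n (T^[k] x) z : ℝ) - maxFit T δ n x z| ≤ k := by
  have h₁ : maxFit T δ n x z ≤ maxFit T δ n (T^[k] x) z + k :=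
    Nat.sub_le_iff_le_add.1 (le_maxFit (sub_mem_fitSet_iterate maxFit_mem_fitSet k))
  have h₂ : maxFit T δ n (T^[k] x) z ≤ maxFit T δ n x z + k :=
    Nat.sub_le_iff_le_add.1 (le_maxFit (sub_mem_fitSet_of_iterate maxFit_mem_fitSet))
  rw [abs_sub_le_iff]
  constructor <;> [have := h₂; have := h₁] <;>
    · rw [sub_le_iff_le_add']; exact_mod_cast this

theorem fbarN_mem_Icc : fbarN T δ n x z ∈ Icc 0 1 := by
  have hfit : (maxFit T δ n x z : ℝ) / n ≤ 1 :=
    div_le_one_of_le₀ (by exact_mod_cast maxFit_le) n.cast_nonneg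
  have : 0 ≤ (maxFit T δ n x z : ℝ) / n := by positivity
  constructor <;> simp only [fbarN] <;> linarith

theorem abs_fbarN_iterate_sub_fbarN_le (k : ℕ) :
    |fbarN T δ n (T^[k] x) z - fbarN T δ n x z| ≤ k / n := by
  rw [fbarN, fbarN, sub_sub_sub_cancel_left, div_sub_div_same, abs_div, Nat.abs_cast,
    abs_sub_comm]
  exact div_le_div_of_nonneg_right (abs_maxFit_iterate_sub_maxFit_le k) n.cast_nonneg

theorem fbar_iterate (k : ℕ) : fbar T δ (T^[k] x) z = fbar T δ x z := by
  have hle (w : X) : IsBoundedUnder (· ≤ ·) atTop (fun n => fbarN T δ n w z) :=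
    isBoundedUnder_of ⟨1, fun _ => fbarN_mem_Icc.2⟩
  have hge (w : X) : IsBoundedUnder (· ≥ ·) atTop (fun n => fbarN T δ n w z) :=
    isBoundedUnder_of ⟨0, fun _ => fbarN_mem_Icc.1⟩
  refine limsup_eq_of_tendsto_sub (hle _) (hge _) (hle _) (hge _) ?_
  refine squeeze_zero_norm (fun n => abs_fbarN_iterate_sub_fbarN_le k) ?_
  exact tendsto_const_div_atTop_nhds_zero_nat (k : ℝ)

end FKPaper

open FKPaper Filter Topology MeasureTheory Set

theorem rhoFK_orbit_invariant_general {X : Type*} [MetricSpace X]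
    (T : X → X) :
    ∀ (n : ℕ) (x y : X), rhoFK T (T^[n] x) y = rhoFK T x y := by
  intro n x y
  simp only [rhoFK, fbar_iterate]

/-- `ρ_FK` is invariant along orbits. -/
theorem rhoFK_orbit_invariant {X : Type*} [MetricSpace X] [CompactSpace X] [Nonempty X]
    (T : X → X) (hT : Continuous T) :
    ∀ (n : ℕ) (x y : X), rhoFK T (T^[n] x) y = rhoFK T x y :=
  rhoFK_orbit_invariant_general T
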